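/- arXiv:1812.04267 — 6 statements merged into one kernel-verified Lean document; each statement's English description precedes it below -/
import Mathlib

section
/- Let F be a Banach space and α : B(F) → B(F) an endomorphism of the algebra of bounded operators of the form α(a) = T a S for fixed T, S ∈ B(F). Then α is injective if and only if S T = 1. -/
/-!
Applying multiplicativity to `1 * 1` shows that `T S` is idempotent, so `T (S T) S = T 1 S`, and
injectivity forces `S T = 1`. Conversely, if `S T = 1` then `a ↦ S a T` is a left inverse of
`a ↦ T a S`.
-/

section Monoid

variable {M : Type*} [Monoid M] {T S : M}

theorem leftInverse_mul_mul_of_mul_eq_one (h : S * T = 1) :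
    Function.LeftInverse (fun b : M => S * b * T) (fun a : M => T * a * S) := fun a => by
  simp only [← mul_assoc, h, one_mul]
  simp only [mul_assoc, h, mul_one]

theorem mul_eq_one_of_injective_mul_mul (hTS : IsIdempotentElem (T * S))
    (hinj : Function.Injective (fun a : M => T * a * S)) : S * T = 1 :=
  hinj <| by
    change T * (S * T) * S = T * 1 * S
    rw [mul_one, ← mul_assoc, mul_assoc (T * S), hTS.eq]

theorem injective_mul_mul_iff (hTS : IsIdempotentElem (T * S)) :
    Function.Injective (fun a : M => T * a * S) ↔ S * T = 1 :=
  ⟨mul_eq_one_of_injective_mul_mul hTS, fun h => (leftInverse_mul_mul_of_mul_eq_one h).injective⟩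

end Monoid

/-- An inner endomorphism `α(a) = T a S` of `B(F)` is injective iff
`S T = 1`. -/
theorem stmt2 {F : Type*} [NormedAddCommGroup F] [NormedSpace ℂ F]
    (T S : F →L[ℂ] F)
    (hmul : ∀ a b : F →L[ℂ] F, T * (a * b) * S = (T * a * S) * (T * b * S)) :
    Function.Injective (fun a : F →L[ℂ] F => T * a * S) ↔ S * T = 1 := by
  have hTS : IsIdempotentElem (T * S) := by
    simpa only [mul_one, one_mul, isIdempotentElem_iff] using (hmul 1 1).symm
  exact injective_mul_mul_iff hTS
end

section
/- Let F be a Banach space and α : B(F) → B(F) a contractive endomorphism of the form α(a) = T a S with T, S ∈ B(F). Then α is isometric if and only if S T = 1 and, after replacing T by ‖T‖⁻¹ T and S by ‖T‖ S, the operator T is an isometry. -/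
/-- A contractive inner endomorphism `α(a) = T a S` of `B(F)` is isometric
iff `S T = 1` and, after normalization, `T` is an isometry. -/
theorem stmt3 {F : Type*} [NormedAddCommGroup F] [NormedSpace ℂ F]
    (T S : F →L[ℂ] F)
    (hmul : ∀ a b : F →L[ℂ] F, T * (a * b) * S = (T * a * S) * (T * b * S))
    (hcontr : ∀ a : F →L[ℂ] F, ‖T * a * S‖ ≤ ‖a‖) :
    (∀ a : F →L[ℂ] F, ‖T * a * S‖ = ‖a‖) ↔
      (S * T = 1 ∧ ∀ h : F, ‖(‖T‖⁻¹ • T) h‖ = ‖h‖) := by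
  constructor
  · intro hiso
    -- S * T = 1
    have hST : S * T = 1 := by
      have h1 := hmul 1 1
      have h2 : T * (1 * (S * T) * 1) * S = (T * 1 * S) * (T * 1 * S) := by
        noncomm_ring
      have h3 : T * (1 - S * T) * S = 0 := by
        have := h1.trans h2.symm
        have e : T * (1 - S * T) * S = T * (1 * 1) * S - T * (1 * (S * T) * 1) * S := by
          noncomm_ring
        rw [e, this, sub_self]
      have h4 : ‖(1 : F →L[ℂ] F) - S * T‖ = 0 := by
        rw [← hiso (1 - S * T), h3, norm_zero]
      have := norm_eq_zero.mp h4
      rw [sub_eq_zero] at this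
      exact this.symm
    refine ⟨hST, ?_⟩
    -- key identity
    have key : ∀ (φ : F →L[ℂ] ℂ) (h : F),
        ‖φ.comp S‖ * ‖T h‖ = ‖φ‖ * ‖h‖ := by
      intro φ h
      have e : T * (φ.smulRight h) * S = (φ.comp S).smulRight (T h) := by
        ext x
        simp [ContinuousLinearMap.mul_apply]
      have := hiso (φ.smulRight h)
      rw [e] at this
      rw [ContinuousLinearMap.norm_smulRight_apply] at this
      rw [this, ContinuousLinearMap.norm_smulRight_apply]
    rcases subsingleton_or_nontrivial F with hsub | hnt
    · intro h
      have : h = 0 := Subsingleton.elim h 0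
      simp [this]
    · obtain ⟨h₀, hh₀⟩ := exists_ne (0 : F)
      obtain ⟨φ₀, hφ₀n, hφ₀v⟩ := exists_dual_vector ℂ h₀ (norm_ne_zero_iff.mpr hh₀)
      have hc : ∀ h : F, ‖φ₀.comp S‖ * ‖T h‖ = ‖h‖ := by
        intro h
        have := key φ₀ h
        rwa [hφ₀n, one_mul] at this
      set c := ‖φ₀.comp S‖ with hcdef
      have hTh₀ : T h₀ ≠ 0 := by
        intro h
        have : (S * T) h₀ = h₀ := by rw [hST]; rfl
        rw [ContinuousLinearMap.mul_apply, h, map_zero] at this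
        exact hh₀ this.symm
      have hcne : c ≠ 0 := by
        intro h
        have := hc h₀
        rw [h, zero_mul] at this
        exact hh₀ (norm_eq_zero.mp this.symm)
      have hcpos : 0 < c := lt_of_le_of_ne (norm_nonneg _) (Ne.symm hcne)
      have hTnorm : ‖T‖ = c⁻¹ := by
        apply le_antisymm
        · apply ContinuousLinearMap.opNorm_le_bound _ (by positivity)
          intro x
          have := hc x
          rw [← this]
          field_simp
          exact le_rfl
        · have h1 : c⁻¹ * ‖h₀‖ = ‖T h₀‖ := by
            rw [← hc h₀]; field_simp
          have h2 : ‖T h₀‖ ≤ ‖T‖ * ‖h₀‖ := T.le_opNorm h₀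
          have hh₀n : 0 < ‖h₀‖ := norm_pos_iff.mpr hh₀
          nlinarith
      intro h
      rw [ContinuousLinearMap.smul_apply, norm_smul, hTnorm, inv_inv,
        Real.norm_eq_abs, abs_of_pos hcpos, hc h]
  · rintro ⟨hST, hiso⟩ a
    refine le_antisymm (hcontr a) ?_
    rcases subsingleton_or_nontrivial F with hsub | hnt
    · have : Subsingleton (F →L[ℂ] F) := by
        constructor; intro f g; ext x; exact Subsingleton.elim _ _
      rw [Subsingleton.elim a 0, Subsingleton.elim (T * 0 * S) (0 : F →L[ℂ] F)]
    · have hTne : ‖T‖ ≠ 0 := by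
        intro h
        obtain ⟨x, hx⟩ := exists_ne (0 : F)
        have := hiso x
        rw [ContinuousLinearMap.smul_apply, norm_smul, h, inv_zero,
          Real.norm_eq_abs, abs_zero, zero_mul] at this
        exact hx (norm_eq_zero.mp this.symm)
      have hTpos : 0 < ‖T‖ := lt_of_le_of_ne (norm_nonneg _) (Ne.symm hTne)
      have hT : ∀ x : F, ‖T x‖ = ‖T‖ * ‖x‖ := by
        intro x
        have := hiso x
        rw [ContinuousLinearMap.smul_apply, norm_smul, Real.norm_eq_abs,
          abs_of_pos (by positivity : (0:ℝ) < ‖T‖⁻¹)] at this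
        field_simp at this ⊢
        linarith
      apply ContinuousLinearMap.opNorm_le_bound _ (norm_nonneg _)
      intro y
      have hSTy : S (T y) = y := by
        have : (S * T) y = (1 : F →L[ℂ] F) y := by rw [hST]
        simpa using this
      calc ‖a y‖ = ‖a (S (T y))‖ := by rw [hSTy]
        _ = ‖T‖⁻¹ * ‖T (a (S (T y)))‖ := by rw [hT]; field_simp
        _ = ‖T‖⁻¹ * ‖(T * a * S) (T y)‖ := by rfl
        _ ≤ ‖T‖⁻¹ * (‖T * a * S‖ * ‖T y‖) := by
            gcongr; exact (T * a * S).le_opNorm (T y)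
        _ = ‖T‖⁻¹ * (‖T * a * S‖ * (‖T‖ * ‖y‖)) := by rw [hT]
        _ = ‖T * a * S‖ * ‖y‖ := by field_simp
end

section
/- Let F be a Banach space and {α_x}_{x∈Δ} a continuous field of inner isometric endomorphisms of B(F), implemented by operators {T_x, S_x} with α_x(a) = T_x a S_x where each T_x is an isometry. Then the implementing operators are unique up to unimodular constants: if T'_x are isometries and S'_x operators with α_x(a) = T'_x a S'_x for all a, then there exists λ ∈ 𝕋 with T_x = λ T'_x and S_x = λ̄ S'_x. -/
/-- The operators implementing an inner isometric endomorphism of `B(F)`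
(with `T` an isometry) are unique up to a unimodular constant: `T = λ T'`, `S = conj λ S'`. -/
theorem stmt5 {F : Type*} [NormedAddCommGroup F] [NormedSpace ℂ F]
    (T S T' S' : F →L[ℂ] F)
    (hT : ∀ h : F, ‖T h‖ = ‖h‖) (hT' : ∀ h : F, ‖T' h‖ = ‖h‖)
    (hmul : ∀ a b : F →L[ℂ] F, T * (a * b) * S = (T * a * S) * (T * b * S))
    (hiso : ∀ a : F →L[ℂ] F, ‖T * a * S‖ = ‖a‖)
    (heq : ∀ a : F →L[ℂ] F, T * a * S = T' * a * S') :
    ∃ lam : ℂ, ‖lam‖ = 1 ∧ T = lam • T' ∧ S = (starRingEnd ℂ lam) • S' := by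
  rcases subsingleton_or_nontrivial F with hs | hs
  · refine ⟨1, by simp, ?_, ?_⟩ <;> ext x <;> exact Subsingleton.elim _ _
  -- Step 1 : S ∘ T = 1
  have hST : ∀ b : F →L[ℂ] F, S * T * b = b := by
    intro b
    have h1 := hmul 1 b
    have h2 : T * (S * T * b - b) * S = 0 := by
      rw [mul_sub, sub_mul]
      rw [one_mul] at h1
      rw [show T * (S * T * b) * S = (T * 1 * S) * (T * b * S) by
        rw [mul_one]; simp only [mul_assoc]]
      rw [← h1, sub_self]
    have h3 := hiso (S * T * b - b)
    rw [h2, norm_zero] at h3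
    exact sub_eq_zero.mp (norm_eq_zero.mp h3.symm)
  have hSTy : ∀ y : F, S (T y) = y := by
    intro y
    have := hST 1
    rw [mul_one] at this
    calc S (T y) = (S * T) y := rfl
    _ = y := by rw [this]; rfl
  -- pick a nonzero vector and a dual functional
  obtain ⟨y, hy⟩ := exists_ne (0 : F)
  obtain ⟨g, hg1, hgy⟩ := exists_dual_vector ℂ y (norm_ne_zero_iff.mpr hy)
  have hgy0 : g y ≠ 0 := by
    rw [hgy]
    simp [hy, norm_eq_zero]
  -- key pointwise identity
  have hx : ∀ x : F, g y • T x = g (S' (T y)) • T' x := by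
    intro x
    have h := heq (g.smulRight x)
    have h2 := congrFun (congrArg DFunLike.coe h) (T y)
    simpa [ContinuousLinearMap.mul_apply, ContinuousLinearMap.smulRight_apply,
      hSTy y] using h2
  set lam : ℂ := g (S' (T y)) / g y with hlam
  have hTx : ∀ x : F, T x = lam • T' x := by
    intro x
    have h := hx x
    calc T x = (g y)⁻¹ • (g y • T x) := (inv_smul_smul₀ hgy0 _).symm
    _ = (g y)⁻¹ • (g (S' (T y)) • T' x) := by rw [h]
    _ = lam • T' x := by rw [smul_smul, hlam, div_eq_inv_mul]
  -- |lam| = 1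
  have hnorm : ‖lam‖ = 1 := by
    have h1 := hT y
    rw [hTx y, norm_smul, hT' y] at h1
    have hy0 : ‖y‖ ≠ 0 := by simp [hy]
    field_simp at h1
    exact h1
  -- injectivity of T'
  have hinj : Function.Injective T' := by
    intro a b hab
    have : ‖T' (a - b)‖ = ‖a - b‖ := hT' _
    rw [map_sub, hab, sub_self, norm_zero] at this
    exact sub_eq_zero.mp (norm_eq_zero.mp this.symm)
  have hlam0 : lam ≠ 0 := by
    intro h
    rw [h, norm_zero] at hnorm
    norm_num at hnorm
  have hconj : (starRingEnd ℂ) lam = lam⁻¹ := by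
    have habs : ‖lam‖ = 1 := hnorm
    exact (Complex.inv_eq_conj habs).symm
  -- S = conj lam • S'
  have hSx : ∀ h : F, S h = (starRingEnd ℂ lam) • S' h := by
    intro h
    have h1 := heq 1
    simp only [mul_one] at h1
    have h2 : T (S h) = T' (S' h) := by
      calc T (S h) = (T * S) h := rfl
      _ = (T' * S') h := by rw [h1]
      _ = T' (S' h) := rfl
    rw [hTx (S h)] at h2
    have h3 : T' (lam • S h) = T' (S' h) := by rw [map_smul]; exact h2
    have h4 := hinj h3
    rw [hconj, ← h4, inv_smul_smul₀ hlam0]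
  refine ⟨lam, hnorm, ?_, ?_⟩
  · ext x; simpa using hTx x
  · ext x; simpa using hSx x
end

section
/- Let H be a Hilbert space, T ∈ B(H) a partial isometry, α(a) := T a T*, and M ⊆ B(H) a self-adjoint subset (M* = M). The following are equivalent: (i) T*T commutes with every element of M; (ii) T a = α(a) T for every a ∈ M; (iii) a T* = T* α(a) for every a ∈ M; (iv) α(ab) = α(a)α(b) for all a, b ∈ M. -/
/-!
With `P = T*T` a self-adjoint idempotent, each of (ii)–(iv) forces `a P = P a P` for every
`a ∈ M`; applied to `a*` and starred this gives `P a = P a P`, so `P` commutes with `a`.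
Conditions (ii) and (iii) are exchanged by taking adjoints. For (iv), the element
`X = a T* - P a T*` satisfies `X* X = T a* a T* - T a* P a T* = α(a* a) - α(a*) α(a) = 0`,
and the C*-identity gives `X = 0`.
-/

open ContinuousLinearMap

section PartialIsometry

variable {A : Type*} [NonUnitalRing A] [StarRing A] {T : A}

theorem star_mul_mul_star_of_mul_star_mul (hT : T * star T * T = T) :
    star T * T * star T = star T := by
  simpa only [star_mul, star_star, mul_assoc] using congrArg star hT

theorem isIdempotentElem_star_mul_self_of_mul_star_mul (hT : T * star T * T = T) :
    IsIdempotentElem (star T * T) := by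
  rw [IsIdempotentElem, mul_assoc, ← mul_assoc T, hT]

theorem mul_eq_mul_mul_of_commute_star_mul_self (hT : T * star T * T = T) {a : A}
    (ha : Commute (star T * T) a) : T * a = T * a * star T * T := by
  calc T * a = T * (star T * T) * a := by rw [← mul_assoc, hT]
    _ = T * a * star T * T := by rw [mul_assoc, ha.eq]; noncomm_ring

theorem mul_star_eq_of_commute_star_mul_self (hT : T * star T * T = T) {a : A}
    (ha : Commute (star T * T) a) : a * star T = star T * (T * a * star T) := by
  calc a * star T = a * (star T * T) * star T := by
        rw [mul_assoc a, star_mul_mul_star_of_mul_star_mul hT]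
    _ = star T * (T * a * star T) := by rw [← ha.eq]; noncomm_ring

theorem conj_mul_of_commute_star_mul_self (hT : T * star T * T = T) (a : A) {b : A}
    (hb : Commute (star T * T) b) :
    T * (a * b) * star T = T * a * star T * (T * b * star T) := by
  calc T * (a * b) * star T = T * a * (b * (star T * T) * star T) := by
        rw [mul_assoc b, star_mul_mul_star_of_mul_star_mul hT]; noncomm_ring
    _ = T * a * star T * (T * b * star T) := by rw [← hb.eq]; noncomm_ring

theorem mul_star_eq_star_mul_conj_iff {a : A} :
    a * star T = star T * (T * a * star T) ↔ T * star a = T * star a * star T * T := by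
  rw [← star_inj]
  simp only [star_mul, star_star, mul_assoc]

theorem mul_star_mul_self_eq_of_mul_star_eq {a : A}
    (ha : a * star T = star T * (T * a * star T)) :
    a * (star T * T) = star T * T * a * (star T * T) := by
  rw [← mul_assoc, ha]
  noncomm_ring

end PartialIsometry

theorem IsSelfAdjoint.commute_of_mul_eq_mul_mul {A : Type*} [NonUnitalRing A] [StarRing A]
    {P a : A} (hP : IsSelfAdjoint P) (h : a * P = P * a * P)
    (h' : star a * P = P * star a * P) : Commute P a := by
  have hleft : P * a = P * a * P := by
    simpa only [star_mul, star_star, hP.star_eq, mul_assoc] using congrArg star h'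
  rw [Commute, SemiconjBy, hleft, ← h]

theorem mul_star_mul_self_eq_of_conj_star_mul {A : Type*} [NonUnitalNormedRing A]
    [StarRing A] [CStarRing A] {T a : A} (hT : T * star T * T = T)
    (ha : T * (star a * a) * star T = T * star a * star T * (T * a * star T)) :
    a * (star T * T) = star T * T * a * (star T * T) := by
  set P := star T * T
  have hP : P * P = P := isIdempotentElem_star_mul_self_of_mul_star_mul hT
  set X := a * star T - P * (a * star T)
  have hX : star X * X = 0 := by
    calc star X * X
        = (T * (star a * a) * star T - T * star a * star T * (T * a * star T))
          + T * star a * (P * P - P) * (a * star T) := by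
          simp only [X, P, star_sub, star_mul, star_star]; noncomm_ring
      _ = 0 := by rw [hP, ha]; simp
  have hcompress : a * star T = P * (a * star T) :=
    sub_eq_zero.mp ((CStarRing.star_mul_self_eq_zero_iff X).mp hX)
  calc a * P = a * star T * T := by rw [mul_assoc]
    _ = P * a * P := by rw [hcompress]; noncomm_ring

/-- For a partial isometry `T` on a Hilbert space, `α(a) = T a T*`, and a
self-adjoint set `M`, the conditions (i) `T*T ∈ M'`, (ii) `T a = α(a) T` on `M`,
(iii) `a T* = T* α(a)` on `M`, and (iv) multiplicativity of `α` on `M` are equivalent. -/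
theorem stmt6 {H : Type*} [NormedAddCommGroup H] [InnerProductSpace ℂ H] [CompleteSpace H]
    (T : H →L[ℂ] H) (hT : T * adjoint T * T = T)
    (M : Set (H →L[ℂ] H)) (hM : ∀ a ∈ M, adjoint a ∈ M) :
    ((∀ a ∈ M, (adjoint T * T) * a = a * (adjoint T * T)) ↔
      (∀ a ∈ M, T * a = (T * a * adjoint T) * T)) ∧
    ((∀ a ∈ M, (adjoint T * T) * a = a * (adjoint T * T)) ↔
      (∀ a ∈ M, a * adjoint T = adjoint T * (T * a * adjoint T))) ∧
    ((∀ a ∈ M, (adjoint T * T) * a = a * (adjoint T * T)) ↔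
      (∀ a ∈ M, ∀ b ∈ M,
        T * (a * b) * adjoint T = (T * a * adjoint T) * (T * b * adjoint T))) := by
  simp only [← star_eq_adjoint] at hT hM ⊢
  have hP : IsSelfAdjoint (star T * T) := IsSelfAdjoint.star_mul_self T
  have commute_of_compress (h : ∀ a ∈ M, a * (star T * T) = star T * T * a * (star T * T)) :
      ∀ a ∈ M, Commute (star T * T) a := fun a ha =>
    hP.commute_of_mul_eq_mul_mul (h a ha) (h (star a) (hM a ha))
  have h13 := Iff.intro (fun h a ha => mul_star_eq_of_commute_star_mul_self hT (h a ha))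
    fun h => commute_of_compress fun a ha => mul_star_mul_self_eq_of_mul_star_eq (h a ha)
  have h23 : (∀ a ∈ M, T * a = T * a * star T * T) ↔
      ∀ a ∈ M, a * star T = star T * (T * a * star T) :=
    ⟨fun h a ha => mul_star_eq_star_mul_conj_iff.mpr (h (star a) (hM a ha)),
      fun h a ha => by simpa only [star_star] using
        mul_star_eq_star_mul_conj_iff.mp (h (star a) (hM a ha))⟩
  refine ⟨h13.trans h23.symm, h13, ?_⟩
  exact ⟨fun h a _ b hb => conj_mul_of_commute_star_mul_self hT a (h b hb),
    fun h => commute_of_compress fun a ha =>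
      mul_star_mul_self_eq_of_conj_star_mul hT (h (star a) (hM a ha) a ha)⟩
end

section
/- Let A ⊆ B(E) be a unital subalgebra, T a partial isometry on the Banach space E, and S₁, S₂ partial isometries adjoint to T (i.e., T Sᵢ T = T, Sᵢ T Sᵢ = Sᵢ, with T, Sᵢ contractions) satisfying T A Sᵢ ⊆ A and Sᵢ T ∈ A' for i = 1, 2. Set αᵢ(a) = T a Sᵢ. Then α₁ and α₂ coincide on A if and only if α₁(1) = α₂(1), which holds if and only if α₁(1)α₂(1) = α₂(1)α₁(1). In particular α₁ = α₂ on A whenever A is commutative. -/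
/-! Since `S₁ T` commutes with `A`, `T a S₁ T = T a` for `a ∈ A`, so
`T a S₁ = T a S₁ T S₁` changes into `T a S₂` once `T S₁ = T S₂`. Moreover
`T S₁ T = T` and `T S₂ T = T` give `(T S₁)(T S₂) = T S₂` and `(T S₂)(T S₁) = T S₁`, so the two
idempotents `T Sᵢ` commute exactly when they are equal. -/

section Semigroup

variable {M : Type*} [Semigroup M]

theorem mul_mul_mul_eq_mul_of_commute {T S a : M} (hT : T * S * T = T)
    (ha : Commute (S * T) a) : T * a * S * T = T * a :=
  calc T * a * S * T = T * (a * (S * T)) := by simp only [mul_assoc]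
    _ = T * S * T * a := by rw [← ha.eq]; simp only [mul_assoc]
    _ = T * a := by rw [hT]

theorem mul_mul_eq_mul_mul_of_mul_eq {T S₁ S₂ a : M} (hT : T * S₁ * T = T)
    (hS : S₁ * T * S₁ = S₁) (ha : Commute (S₁ * T) a) (h : T * S₁ = T * S₂) :
    T * a * S₁ = T * a * S₂ :=
  calc T * a * S₁ = T * a * (S₁ * (T * S₁)) := by rw [← mul_assoc S₁, hS]
    _ = T * a * (S₁ * (T * S₂)) := by rw [h]
    _ = T * a * S₁ * T * S₂ := by simp only [mul_assoc]
    _ = T * a * S₂ := by rw [mul_mul_mul_eq_mul_of_commute hT ha]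

theorem mul_mul_mul_eq_of_mul_mul_eq {T S₁ : M} (hT : T * S₁ * T = T) (S₂ : M) :
    T * S₁ * (T * S₂) = T * S₂ := by
  rw [← mul_assoc, hT]

theorem eq_iff_mul_comm_of_mul_eq {x y : M} (hxy : x * y = y) (hyx : y * x = x) :
    x = y ↔ x * y = y * x := by
  refine ⟨fun h ↦ by rw [h], fun h ↦ ?_⟩
  rw [hxy, hyx] at h
  exact h.symm

end Semigroup

theorem stmt8_general {E : Type*} [NormedAddCommGroup E] [NormedSpace ℂ E]
    (A : Subalgebra ℂ (E →L[ℂ] E)) (T S₁ S₂ : E →L[ℂ] E)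
    (h₁ : T * S₁ * T = T) (h₁' : S₁ * T * S₁ = S₁)
    (h₂ : T * S₂ * T = T)
    (hA₁ : ∀ a ∈ A, T * a * S₁ ∈ A) (hA₂ : ∀ a ∈ A, T * a * S₂ ∈ A)
    (hc₁ : ∀ a ∈ A, (S₁ * T) * a = a * (S₁ * T)) :
    ((∀ a ∈ A, T * a * S₁ = T * a * S₂) ↔ T * S₁ = T * S₂) ∧
    (T * S₁ = T * S₂ ↔ (T * S₁) * (T * S₂) = (T * S₂) * (T * S₁)) ∧
    ((∀ a ∈ A, ∀ b ∈ A, a * b = b * a) → ∀ a ∈ A, T * a * S₁ = T * a * S₂) := by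
  have hunit : T * S₁ = T * S₂ → ∀ a ∈ A, T * a * S₁ = T * a * S₂ := fun h a ha ↦
    mul_mul_eq_mul_mul_of_mul_eq h₁ h₁' (hc₁ a ha) h
  have hcomm : T * S₁ = T * S₂ ↔ (T * S₁) * (T * S₂) = (T * S₂) * (T * S₁) :=
    eq_iff_mul_comm_of_mul_eq (mul_mul_mul_eq_of_mul_mul_eq h₁ S₂)
      (mul_mul_mul_eq_of_mul_mul_eq h₂ S₁)
  refine ⟨⟨fun h ↦ by simpa using h 1 A.one_mem, hunit⟩, hcomm, fun hA ↦ hunit ?_⟩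
  exact hcomm.mpr <| hA _ (by simpa using hA₁ 1 A.one_mem) _ (by simpa using hA₂ 1 A.one_mem)

/-- If `S₁, S₂` are partial isometries adjoint to a partial isometry `T`,
both compatible with a unital subalgebra `A ⊆ B(E)` (i.e. `T A Sᵢ ⊆ A` and `Sᵢ T ∈ A'`),
then the induced endomorphisms `αᵢ(a) = T a Sᵢ` coincide on `A` iff `α₁(1) = α₂(1)`, which
holds iff `α₁(1)` and `α₂(1)` commute; in particular `α₁ = α₂` on `A` when `A` is
commutative. -/
theorem stmt8 {E : Type*} [NormedAddCommGroup E] [NormedSpace ℂ E]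
    (A : Subalgebra ℂ (E →L[ℂ] E)) (T S₁ S₂ : E →L[ℂ] E)
    (hTc : ‖T‖ ≤ 1) (hS₁c : ‖S₁‖ ≤ 1) (hS₂c : ‖S₂‖ ≤ 1)
    (h₁ : T * S₁ * T = T) (h₁' : S₁ * T * S₁ = S₁)
    (h₂ : T * S₂ * T = T) (h₂' : S₂ * T * S₂ = S₂)
    (hA₁ : ∀ a ∈ A, T * a * S₁ ∈ A) (hA₂ : ∀ a ∈ A, T * a * S₂ ∈ A)
    (hc₁ : ∀ a ∈ A, (S₁ * T) * a = a * (S₁ * T))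
    (hc₂ : ∀ a ∈ A, (S₂ * T) * a = a * (S₂ * T)) :
    ((∀ a ∈ A, T * a * S₁ = T * a * S₂) ↔ T * S₁ = T * S₂) ∧
    (T * S₁ = T * S₂ ↔ (T * S₁) * (T * S₂) = (T * S₂) * (T * S₁)) ∧
    ((∀ a ∈ A, ∀ b ∈ A, a * b = b * a) → ∀ a ∈ A, T * a * S₁ = T * a * S₂) :=
  stmt8_general A T S₁ S₂ h₁ h₁' h₂ hA₁ hA₂ hc₁
end

section
/- Let α : A → A be a contractive endomorphism of a unital Banach algebra A. Then for every a ∈ A and every k ∈ ℕ, the spectral radius of the weighted endomorphism a·α (as a bounded operator on A) satisfies r(aα) = r(α^k(a) α) = lim_{n→∞} ‖a · α(a) · ... · αⁿ(a)‖^{1/n}. -/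
open Filter
open scoped ENNReal NNReal Topology

set_option linter.unusedSectionVars false

namespace Stmt10Aux

variable {A : Type*} [NormedRing A] [NormedAlgebra ℂ A] [CompleteSpace A] [NormOneClass A]

/-- The weighted endomorphism `b ↦ a * α b`. -/
noncomputable def T (αL : A →L[ℂ] A) (a : A) : A →L[ℂ] A :=
  (ContinuousLinearMap.mul ℂ A a).comp αL

/-- The partial product `a * α a * ⋯ * α^(n-1) a`. -/
noncomputable def p (αL : A →L[ℂ] A) (a : A) (n : ℕ) : A :=
  ((List.range n).map fun j => (αL ^ j) a).prod

lemma pow_apply_mul (αL : A →L[ℂ] A) (hmul : ∀ a b : A, αL (a * b) = αL a * αL b) :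
    ∀ (n : ℕ) (x y : A), (αL ^ n) (x * y) = (αL ^ n) x * (αL ^ n) y := by
  intro n
  induction n with
  | zero => intro x y; simp
  | succ n ih =>
    intro x y
    simp only [pow_succ, ContinuousLinearMap.mul_apply, hmul, ih]

lemma pow_contr (αL : A →L[ℂ] A) (hcontr : ∀ a : A, ‖αL a‖ ≤ ‖a‖) :
    ∀ (n : ℕ) (x : A), ‖(αL ^ n) x‖ ≤ ‖x‖ := by
  intro n
  induction n with
  | zero => intro x; simp
  | succ n ih =>
    intro x
    rw [pow_succ, ContinuousLinearMap.mul_apply]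
    exact (ih _).trans (hcontr x)

lemma p_succ (αL : A →L[ℂ] A) (a : A) (n : ℕ) :
    p αL a (n + 1) = p αL a n * (αL ^ n) a := by
  simp [p, List.range_succ]

lemma p_one (αL : A →L[ℂ] A) (a : A) : p αL a 1 = a := by
  simp [p, List.range_succ]

lemma pow_pow_apply (αL : A →L[ℂ] A) (j k : ℕ) (a : A) :
    (αL ^ j) ((αL ^ k) a) = (αL ^ (k + j)) a := by
  rw [← ContinuousLinearMap.mul_apply, ← pow_add, Nat.add_comm j k]

lemma T_pow_apply (αL : A →L[ℂ] A) (hmul : ∀ a b : A, αL (a * b) = αL a * αL b) (a : A) :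
    ∀ (n : ℕ) (b : A), ((T αL a) ^ n) b = p αL a n * (αL ^ n) b := by
  intro n
  induction n with
  | zero => intro b; simp [p]
  | succ n ih =>
    intro b
    rw [pow_succ, ContinuousLinearMap.mul_apply, ih]
    have hTb : (T αL a) b = a * αL b := rfl
    rw [hTb, pow_apply_mul αL hmul, p_succ, mul_assoc,
      ← ContinuousLinearMap.mul_apply, ← pow_succ]

lemma p_eq_T_pow (αL : A →L[ℂ] A) (hmul : ∀ a b : A, αL (a * b) = αL a * αL b) (a : A)
    (n : ℕ) : p αL a (n + 1) = ((T αL a) ^ n) a := by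
  rw [T_pow_apply αL hmul a n a, ← p_succ]

lemma norm_T_pow_succ_le (αL : A →L[ℂ] A) (hmul : ∀ a b : A, αL (a * b) = αL a * αL b)
    (hcontr : ∀ a : A, ‖αL a‖ ≤ ‖a‖) (a : A) (n : ℕ) :
    ‖(T αL a) ^ (n + 1)‖ ≤ ‖p αL a (n + 1)‖ := by
  refine ContinuousLinearMap.opNorm_le_bound _ (norm_nonneg _) fun b => ?_
  rw [T_pow_apply αL hmul]
  calc ‖p αL a (n + 1) * (αL ^ (n + 1)) b‖ ≤ ‖p αL a (n + 1)‖ * ‖(αL ^ (n + 1)) b‖ :=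
        norm_mul_le _ _
    _ ≤ ‖p αL a (n + 1)‖ * ‖b‖ :=
        mul_le_mul_of_nonneg_left (pow_contr αL hcontr _ _) (norm_nonneg _)

lemma norm_p_le (αL : A →L[ℂ] A) (hmul : ∀ a b : A, αL (a * b) = αL a * αL b) (a : A)
    (n : ℕ) : ‖p αL a (n + 1)‖ ≤ ‖(T αL a) ^ n‖ * ‖a‖ := by
  rw [p_eq_T_pow αL hmul]
  exact ContinuousLinearMap.le_opNorm _ _

lemma p_shift (αL : A →L[ℂ] A) (hmul : ∀ a b : A, αL (a * b) = αL a * αL b) (a : A)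
    (k : ℕ) : ∀ m : ℕ, (αL ^ k) (p αL a (m + 1)) = p αL ((αL ^ k) a) (m + 1) := by
  intro m
  induction m with
  | zero => rw [p_one, p_one]
  | succ m ih =>
    rw [p_succ αL a (m + 1), pow_apply_mul αL hmul, ih, pow_pow_apply,
      p_succ αL ((αL ^ k) a) (m + 1), pow_pow_apply, Nat.add_comm (m + 1) k]

lemma p_split (αL : A →L[ℂ] A) (hmul : ∀ a b : A, αL (a * b) = αL a * αL b) (a : A)
    (k : ℕ) : ∀ m : ℕ, p αL a (k + (m + 1)) = p αL a k * p αL ((αL ^ k) a) (m + 1) := by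
  intro m
  induction m with
  | zero =>
    show p αL a (k + 1) = _
    rw [p_succ, p_one]
  | succ m ih =>
    have h : k + (m + 1 + 1) = (k + (m + 1)) + 1 := by omega
    rw [h, p_succ αL a (k + (m + 1)), ih, mul_assoc,
      p_succ αL ((αL ^ k) a) (m + 1), pow_pow_apply]

lemma nontrivial_of_normOne : Nontrivial A :=
  ⟨1, 0, fun h => by
    have h1 : ‖(1 : A)‖ = 1 := norm_one
    rw [h, norm_zero] at h1
    exact zero_ne_one h1⟩

lemma spectralRadius_ne_top (αL : A →L[ℂ] A) (a : A) :
    spectralRadius ℂ (T αL a) ≠ ⊤ := by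
  haveI : Nontrivial A := nontrivial_of_normOne
  exact ne_top_of_le_ne_top ENNReal.coe_ne_top (spectrum.spectralRadius_le_nnnorm (𝕜 := ℂ) (T αL a))

lemma exp_tendsto (k : ℕ) : Tendsto (fun n : ℕ => ((n : ℝ) + k) / (n : ℝ)) atTop (𝓝 1) := by
  have h0 : Tendsto (fun n : ℕ => 1 + (k : ℝ) / (n : ℝ)) atTop (𝓝 1) := by
    simpa using tendsto_const_nhds.add (tendsto_const_div_atTop_nhds_zero_nat (k : ℝ))
  apply h0.congr'
  filter_upwards [eventually_ge_atTop 1] with n hn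
  have hn' : (n : ℝ) ≠ 0 := by
    exact_mod_cast Nat.one_le_iff_ne_zero.mp hn
  field_simp

/-- If `u n ^ (1/(n+k))`-type sequence tends to `r`, so does the `1/n`-exponent version. -/
lemma shift_exponent (u : ℕ → ℝ≥0) (k : ℕ) (r : ℝ≥0)
    (h : Tendsto (fun n : ℕ => u n ^ (1 / (n : ℝ))) atTop (𝓝 r)) :
    Tendsto (fun n : ℕ => u (n + k) ^ (1 / (n : ℝ))) atTop (𝓝 r) := by
  have hshift : Tendsto (fun n : ℕ => u (n + k) ^ (1 / ((n + k : ℕ) : ℝ))) atTop (𝓝 r) :=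
    h.comp (tendsto_add_atTop_nat k)
  have h2 := Tendsto.nnrpow hshift (exp_tendsto k) (Or.inr one_pos)
  rw [NNReal.rpow_one] at h2
  apply h2.congr'
  filter_upwards [eventually_ge_atTop 1] with n hn
  have hn' : (n : ℝ) ≠ 0 := by exact_mod_cast Nat.one_le_iff_ne_zero.mp hn
  have hnk : ((n + k : ℕ) : ℝ) ≠ 0 := by
    have : (1 : ℕ) ≤ n + k := hn.trans (Nat.le_add_right n k)
    exact_mod_cast Nat.one_le_iff_ne_zero.mp this
  rw [← NNReal.rpow_mul]
  congr 1
  push_cast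
  field_simp

lemma rpow_one_div_tendsto_one {x : ℝ≥0} (hx : x ≠ 0) :
    Tendsto (fun n : ℕ => x ^ (1 / (n : ℝ))) atTop (𝓝 1) := by
  have := Tendsto.nnrpow (tendsto_const_nhds (x := x))
    tendsto_one_div_atTop_nhds_zero_nat (Or.inl hx)
  simpa [NNReal.rpow_zero] using this

lemma keyNN (αL : A →L[ℂ] A) (hmul : ∀ a b : A, αL (a * b) = αL a * αL b)
    (hcontr : ∀ a : A, ‖αL a‖ ≤ ‖a‖) (a : A) :
    Tendsto (fun n : ℕ => ‖p αL a (n + 1)‖₊ ^ (1 / (n : ℝ))) atTop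
      (𝓝 ((spectralRadius ℂ (T αL a)).toNNReal)) := by
  haveI : Nontrivial A := nontrivial_of_normOne
  set M := T αL a with hM
  set rr := (spectralRadius ℂ M).toNNReal with hrr
  have hcoe : (rr : ℝ≥0∞) = spectralRadius ℂ M := ENNReal.coe_toNNReal (spectralRadius_ne_top αL a)
  have hg0 := spectrum.pow_nnnorm_pow_one_div_tendsto_nhds_spectralRadius M
  rw [← hcoe] at hg0
  have hg : Tendsto (fun n : ℕ => ‖M ^ n‖₊ ^ (1 / (n : ℝ))) atTop (𝓝 rr) := by
    refine ENNReal.tendsto_coe.mp (hg0.congr fun n => ?_)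
    exact (ENNReal.coe_rpow_of_nonneg _ (by positivity)).symm
  by_cases ha : a = 0
  · have hM0 : M = 0 := by
      ext b
      simp [hM, T, ha]
    have hrr0 : rr = 0 := by
      rw [hrr, hM0]
      simp
    rw [hrr0]
    apply Tendsto.congr' ?_ (tendsto_const_nhds (x := (0 : ℝ≥0)))
    filter_upwards [eventually_ge_atTop 1] with n hn
    have hn' : (1 : ℝ) / (n : ℝ) ≠ 0 := by
      have : (n : ℝ) ≠ 0 := by exact_mod_cast Nat.one_le_iff_ne_zero.mp hn
      positivity
    have hp0 : p αL a (n + 1) = 0 := by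
      rw [p_eq_T_pow αL hmul, ha]
      simp
    rw [hp0, nnnorm_zero, NNReal.zero_rpow hn']
  · have hane : ‖a‖₊ ≠ 0 := by simpa using ha
    have hlow : Tendsto (fun n : ℕ => ‖M ^ (n + 1)‖₊ ^ (1 / (n : ℝ))) atTop (𝓝 rr) :=
      shift_exponent (fun n => ‖M ^ n‖₊) 1 rr hg
    have hupp : Tendsto
        (fun n : ℕ => ‖M ^ n‖₊ ^ (1 / (n : ℝ)) * ‖a‖₊ ^ (1 / (n : ℝ))) atTop (𝓝 rr) := by
      simpa using hg.mul (rpow_one_div_tendsto_one hane)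
    refine tendsto_of_tendsto_of_tendsto_of_le_of_le hlow hupp (fun n => ?_) (fun n => ?_)
    · refine NNReal.rpow_le_rpow ?_ (by positivity)
      have h := norm_T_pow_succ_le αL hmul hcontr a n
      rw [← NNReal.coe_le_coe]
      exact_mod_cast h
    · rw [← NNReal.mul_rpow]
      refine NNReal.rpow_le_rpow ?_ (by positivity)
      have h := norm_p_le αL hmul a n
      rw [← NNReal.coe_le_coe]
      push_cast
      exact_mod_cast h

lemma keyENN (αL : A →L[ℂ] A) (hmul : ∀ a b : A, αL (a * b) = αL a * αL b)
    (hcontr : ∀ a : A, ‖αL a‖ ≤ ‖a‖) (a : A) :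
    Tendsto (fun n : ℕ => (‖p αL a (n + 1)‖₊ : ℝ≥0∞) ^ (1 / (n : ℝ))) atTop
      (𝓝 (spectralRadius ℂ (T αL a))) := by
  rw [← ENNReal.coe_toNNReal (spectralRadius_ne_top αL a)]
  refine (ENNReal.tendsto_coe.mpr (keyNN αL hmul hcontr a)).congr fun n => ?_
  exact ENNReal.coe_rpow_of_nonneg _ (by positivity)

lemma radius_eq (αL : A →L[ℂ] A) (hmul : ∀ a b : A, αL (a * b) = αL a * αL b)
    (hcontr : ∀ a : A, ‖αL a‖ ≤ ‖a‖) (a : A) (k : ℕ) :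
    spectralRadius ℂ (T αL a) = spectralRadius ℂ (T αL ((αL ^ k) a)) := by
  set b := (αL ^ k) a with hb
  set ra := (spectralRadius ℂ (T αL a)).toNNReal with hra
  set rb := (spectralRadius ℂ (T αL b)).toNNReal with hrb
  have hu := keyNN αL hmul hcontr a
  have hv := keyNN αL hmul hcontr b
  have hba : rb ≤ ra := by
    refine le_of_tendsto_of_tendsto' hv hu fun n => ?_
    refine NNReal.rpow_le_rpow ?_ (by positivity)
    rw [← NNReal.coe_le_coe]
    have h1 : p αL b (n + 1) = (αL ^ k) (p αL a (n + 1)) := (p_shift αL hmul a k n).symm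
    rw [h1]
    exact_mod_cast pow_contr αL hcontr k (p αL a (n + 1))
  have hab : ra ≤ rb := by
    by_cases hz : ‖p αL a k‖₊ = 0
    · have hpk : p αL a k = 0 := by simpa using hz
      have hra0 : ra = 0 := by
        refine tendsto_nhds_unique hu (Tendsto.congr' ?_
          (tendsto_const_nhds (x := (0 : ℝ≥0))))
        filter_upwards [eventually_ge_atTop (k + 1)] with n hn
        have hn1 : 1 ≤ n := le_trans (Nat.le_add_left 1 k) hn
        have hn' : (1 : ℝ) / (n : ℝ) ≠ 0 := by
          have : (n : ℝ) ≠ 0 := by exact_mod_cast Nat.one_le_iff_ne_zero.mp hn1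
          positivity
        have hsp : p αL a (n + 1) = 0 := by
          have hidx : n + 1 = k + ((n - k - 1) + 1 + 1) := by omega
          rw [hidx, p_split αL hmul a k, hpk, zero_mul]
        rw [hsp, nnnorm_zero, NNReal.zero_rpow hn']
      rw [hra0]
      exact zero_le
    · have ht := rpow_one_div_tendsto_one hz
      have hw : Tendsto (fun n : ℕ => ‖p αL a (n + k + 1)‖₊ ^ (1 / (n : ℝ))) atTop (𝓝 ra) :=
        shift_exponent (fun n => ‖p αL a (n + 1)‖₊) k ra hu
      have hcomb : Tendsto
          (fun n : ℕ => ‖p αL a k‖₊ ^ (1 / (n : ℝ)) * ‖p αL b (n + 1)‖₊ ^ (1 / (n : ℝ)))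
          atTop (𝓝 rb) := by
        simpa using ht.mul hv
      refine le_of_tendsto_of_tendsto' hw hcomb fun n => ?_
      rw [← NNReal.mul_rpow]
      refine NNReal.rpow_le_rpow ?_ (by positivity)
      have hidx : n + k + 1 = k + (n + 1) := by omega
      rw [hidx, p_split αL hmul a k n]
      exact nnnorm_mul_le _ _
  have heq : ra = rb := le_antisymm hab hba
  rw [← ENNReal.coe_toNNReal (spectralRadius_ne_top αL a),
    ← ENNReal.coe_toNNReal (spectralRadius_ne_top αL b), ← hra, ← hrb, heq]

end Stmt10Aux

/-- For a contractive endomorphism `α` of a unital Banach algebra `A`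
and `a ∈ A`, the spectral radius of the weighted endomorphism `aα : b ↦ a · α(b)`
satisfies `r(aα) = r(α^k(a) α)` for every `k`, and
`r(aα) = lim_n ‖a · α(a) ⋯ αⁿ(a)‖^{1/n}`. -/
theorem stmt10 {A : Type*} [NormedRing A] [NormedAlgebra ℂ A] [CompleteSpace A]
    [NormOneClass A] (αL : A →L[ℂ] A)
    (hmul : ∀ a b : A, αL (a * b) = αL a * αL b)
    (hcontr : ∀ a : A, ‖αL a‖ ≤ ‖a‖) (a : A) :
    (∀ k : ℕ,
      spectralRadius ℂ ((ContinuousLinearMap.mul ℂ A a).comp αL) =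
        spectralRadius ℂ ((ContinuousLinearMap.mul ℂ A ((αL ^ k) a)).comp αL)) ∧
    Tendsto
      (fun n : ℕ =>
        (‖(((List.range (n + 1)).map fun j => (αL ^ j) a).prod)‖₊ : ℝ≥0∞) ^ (1 / (n : ℝ)))
      atTop (𝓝 (spectralRadius ℂ ((ContinuousLinearMap.mul ℂ A a).comp αL))) := by
  constructor
  · intro k
    exact Stmt10Aux.radius_eq αL hmul hcontr a k
  · exact Stmt10Aux.keyENN αL hmul hcontr a
end
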